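/- arXiv:1802.08829 — 3 statements merged into one kernel-verified Lean document; each statement's English description precedes it below -/
import Mathlib

section
/- If (X,d) is a Ptolemy metric space, p ∈ X, and x1, x2, x3, x4 ∈ X \ {p}, then with p_i = d(p,x_i) and d_{ij} = d(x_i,x_j): p3·p4·d12 + p1·p2·d34 + d12·d34 ≤ p2·p4·d13 + p1·p3·d24 + d13·d24 + p2·p3·d14 + p1·p4·d23 + d14·d23 + p1·p2·p3·p4. -/
/-!
Multiplying Ptolemy's inequality for a quadruple containing the base point `p` by the distance
from `p` to the remaining point, and averaging over the four such quadruples, bounds the two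
`p`-weighted terms on the left by the four `p`-weighted terms on the right. Ptolemy's inequality
for `x₁, x₂, x₃, x₄` handles the unweighted term, and the product `p₁ p₂ p₃ p₄` is nonnegative.
-/

def IsPtolemy (X : Type*) [MetricSpace X] : Prop :=
  ∀ x1 x2 x3 x4 : X,
    dist x1 x2 * dist x3 x4 ≤ dist x1 x4 * dist x2 x3 + dist x1 x3 * dist x2 x4

namespace IsPtolemy

variable {X : Type*} [MetricSpace X]

theorem mul_dist_le_of_basepoint (h : IsPtolemy X) (p x1 x2 x3 x4 : X) :
    dist p x3 * dist p x4 * dist x1 x2 ≤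
      dist p x2 * dist p x4 * dist x1 x3 + dist p x1 * dist p x4 * dist x2 x3 := by
  have hp := h x1 x2 x3 p
  rw [dist_comm x3 p, dist_comm x1 p, dist_comm x2 p] at hp
  calc dist p x3 * dist p x4 * dist x1 x2 = dist x1 x2 * dist p x3 * dist p x4 := by ring
    _ ≤ (dist p x1 * dist x2 x3 + dist x1 x3 * dist p x2) * dist p x4 :=
        mul_le_mul_of_nonneg_right hp dist_nonneg
    _ = _ := by ring

theorem weighted_le_of_basepoint (h : IsPtolemy X) (p x1 x2 x3 x4 : X) :
    dist p x3 * dist p x4 * dist x1 x2 + dist p x1 * dist p x2 * dist x3 x4 ≤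
      dist p x2 * dist p x4 * dist x1 x3 + dist p x1 * dist p x3 * dist x2 x4 +
        dist p x2 * dist p x3 * dist x1 x4 + dist p x1 * dist p x4 * dist x2 x3 := by
  have h₁ := h.mul_dist_le_of_basepoint p x1 x2 x3 x4
  have h₂ := h.mul_dist_le_of_basepoint p x1 x2 x4 x3
  have h₃ := h.mul_dist_le_of_basepoint p x3 x4 x1 x2
  have h₄ := h.mul_dist_le_of_basepoint p x3 x4 x2 x1
  rw [dist_comm x3 x1, dist_comm x4 x1] at h₃
  rw [dist_comm x3 x2, dist_comm x4 x2] at h₄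
  linarith

end IsPtolemy

theorem stmt12_general {X : Type*} [MetricSpace X]
    (hPt : ∀ x1 x2 x3 x4 : X,
      dist x1 x2 * dist x3 x4 ≤ dist x1 x4 * dist x2 x3 + dist x1 x3 * dist x2 x4)
    (p x1 x2 x3 x4 : X) :
    dist p x3 * dist p x4 * dist x1 x2 + dist p x1 * dist p x2 * dist x3 x4 +
        dist x1 x2 * dist x3 x4 ≤
      dist p x2 * dist p x4 * dist x1 x3 + dist p x1 * dist p x3 * dist x2 x4 +
        dist x1 x3 * dist x2 x4 +
      dist p x2 * dist p x3 * dist x1 x4 + dist p x1 * dist p x4 * dist x2 x3 +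
        dist x1 x4 * dist x2 x3 +
      dist p x1 * dist p x2 * dist p x3 * dist p x4 := by
  have hweighted := IsPtolemy.weighted_le_of_basepoint hPt p x1 x2 x3 x4
  have hquad := hPt x1 x2 x3 x4
  have hprod : 0 ≤ dist p x1 * dist p x2 * dist p x3 * dist p x4 := by positivity
  linarith

theorem stmt12 {X : Type*} [MetricSpace X]
    (hPt : ∀ x1 x2 x3 x4 : X,
      dist x1 x2 * dist x3 x4 ≤ dist x1 x4 * dist x2 x3 + dist x1 x3 * dist x2 x4)
    (p x1 x2 x3 x4 : X) (h1 : x1 ≠ p) (h2 : x2 ≠ p) (h3 : x3 ≠ p) (h4 : x4 ≠ p) :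
    dist p x3 * dist p x4 * dist x1 x2 + dist p x1 * dist p x2 * dist x3 x4 +
        dist x1 x2 * dist x3 x4 ≤
      dist p x2 * dist p x4 * dist x1 x3 + dist p x1 * dist p x3 * dist x2 x4 +
        dist x1 x3 * dist x2 x4 +
      dist p x2 * dist p x3 * dist x1 x4 + dist p x1 * dist p x4 * dist x2 x3 +
        dist x1 x4 * dist x2 x3 +
      dist p x1 * dist p x2 * dist p x3 * dist p x4 :=
  stmt12_general hPt p x1 x2 x3 x4
end

section
/- If (X,d) is a Ptolemy metric space and p ∈ X, then the metric χ_p(x,y) = log(1 + d(x,y)/(d(p,x)·d(p,y))) on X \ {p} is (log 2)/2-hyperbolic: (x|y)_o ≥ min{(x|z)_o, (z|y)_o} - (log 2)/2 for all x, y, z, o ∈ X \ {p}, where the Gromov product is taken with respect to χ_p. -/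
/-!
The function `ρ x y = d(x, y) / (d(p, x) d(p, y))` is again a Ptolemaic metric on `X \ {p}`
(the metric inversion at `p`): the Ptolemy inequality for `d` at the quadruple `x, y, z, p`
is exactly the triangle inequality for `ρ`, and Ptolemy's inequality survives division by
`d(p, x) d(p, y) d(p, z) d(p, w)`. For a Ptolemaic metric, expanding
`(1 + ρ o z)(1 + ρ x y)` and using the triangle and Ptolemy inequalities bounds it by
`(1 + ρ o y)(1 + ρ x z) + (1 + ρ o x)(1 + ρ z y)`, hence by twice the larger summand.
Taking logarithms gives the four-point condition for `χ = log (1 + ρ)` with constant `log 2`,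
which is the `(log 2)/2`-hyperbolicity of `χ` in terms of Gromov products.
-/

open Real

def IsPtolemaic (X : Type*) [Dist X] : Prop :=
  ∀ x1 x2 x3 x4 : X,
    dist x1 x2 * dist x3 x4 ≤ dist x1 x4 * dist x2 x3 + dist x1 x3 * dist x2 x4

noncomputable def inversionDist {X : Type*} [Dist X] (p x y : X) : ℝ :=
  dist x y / (dist p x * dist p y)

section inversionDist

variable {X : Type*}

lemma inversionDist_comm [PseudoMetricSpace X] (p x y : X) :
    inversionDist p x y = inversionDist p y x := by
  rw [inversionDist, inversionDist, dist_comm x y, mul_comm]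

lemma inversionDist_nonneg [PseudoMetricSpace X] (p x y : X) : 0 ≤ inversionDist p x y := by
  unfold inversionDist; positivity

lemma IsPtolemaic.inversionDist_triangle [MetricSpace X] {p : X} (hX : IsPtolemaic X)
    {x y z : X} (hx : x ≠ p) (hy : y ≠ p) (hz : z ≠ p) :
    inversionDist p x z ≤ inversionDist p x y + inversionDist p y z := by
  have hpx : dist p x ≠ 0 := dist_ne_zero.mpr hx.symm
  have hpy : dist p y ≠ 0 := dist_ne_zero.mpr hy.symm
  have hpz : dist p z ≠ 0 := dist_ne_zero.mpr hz.symm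
  have hD : 0 ≤ dist p x * dist p y * dist p z := by positivity
  calc inversionDist p x z = dist x z * dist p y / (dist p x * dist p y * dist p z) := by
        unfold inversionDist; field_simp
    _ ≤ (dist p x * dist y z + dist x y * dist p z) / (dist p x * dist p y * dist p z) := by
        refine div_le_div_of_nonneg_right ?_ hD
        simpa only [dist_comm] using hX x z y p
    _ = inversionDist p x y + inversionDist p y z := by
        unfold inversionDist; field_simp; ring

lemma IsPtolemaic.inversionDist_mul_le [PseudoMetricSpace X] (hX : IsPtolemaic X) (p : X) :
    ∀ x y z w : X, inversionDist p x y * inversionDist p z w ≤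
      inversionDist p x w * inversionDist p y z + inversionDist p x z * inversionDist p y w := by
  intro x y z w
  have hD : 0 ≤ dist p x * dist p y * dist p z * dist p w := by positivity
  calc inversionDist p x y * inversionDist p z w
      = dist x y * dist z w / (dist p x * dist p y * dist p z * dist p w) := by
        unfold inversionDist; ring
    _ ≤ (dist x w * dist y z + dist x z * dist y w) /
          (dist p x * dist p y * dist p z * dist p w) :=
        div_le_div_of_nonneg_right (hX x y z w) hD
    _ = inversionDist p x w * inversionDist p y z + inversionDist p x z * inversionDist p y w := by
        unfold inversionDist; ring

lemma IsPtolemaic.one_add_inversionDist_mul_le [MetricSpace X] {p : X} (hX : IsPtolemaic X)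
    {x y z o : X} (hx : x ≠ p) (hy : y ≠ p) (hz : z ≠ p) (ho : o ≠ p) :
    (1 + inversionDist p o z) * (1 + inversionDist p x y) ≤
      (1 + inversionDist p o y) * (1 + inversionDist p x z) +
        (1 + inversionDist p o x) * (1 + inversionDist p z y) := by
  have hsum : inversionDist p o z + inversionDist p x y ≤
      inversionDist p o x + inversionDist p o y + inversionDist p x z + inversionDist p z y := by
    have := inversionDist_comm p x o
    have := inversionDist_comm p y z
    rcases le_total (inversionDist p x z) (inversionDist p o y) with h | h
    · linarith [hX.inversionDist_triangle ho hx hz, hX.inversionDist_triangle hx hz hy]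
    · linarith [hX.inversionDist_triangle ho hy hz, hX.inversionDist_triangle hx ho hy]
  have hmul := hX.inversionDist_mul_le p x y z o
  rw [inversionDist_comm p z o, inversionDist_comm p x o, inversionDist_comm p y z,
    inversionDist_comm p y o] at hmul
  linarith

lemma IsPtolemaic.log_one_add_inversionDist_four_point [MetricSpace X] {p : X}
    (hX : IsPtolemaic X) {x y z o : X} (hx : x ≠ p) (hy : y ≠ p) (hz : z ≠ p) (ho : o ≠ p) :
    log (1 + inversionDist p o z) + log (1 + inversionDist p x y) ≤
      max (log (1 + inversionDist p o y) + log (1 + inversionDist p x z))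
        (log (1 + inversionDist p o x) + log (1 + inversionDist p z y)) + log 2 := by
  have hpos (a b : X) : 0 < 1 + inversionDist p a b := by
    linarith [inversionDist_nonneg p a b]
  have hlog (a b c d : X) : log (1 + inversionDist p a b) + log (1 + inversionDist p c d) =
      log ((1 + inversionDist p a b) * (1 + inversionDist p c d)) :=
    (log_mul (hpos a b).ne' (hpos c d).ne').symm
  have hkey := hX.one_add_inversionDist_mul_le hx hy hz ho
  rw [hlog, hlog, hlog]
  set A := (1 + inversionDist p o y) * (1 + inversionDist p x z)
  set B := (1 + inversionDist p o x) * (1 + inversionDist p z y)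
  have hA : 0 < A := mul_pos (hpos o y) (hpos x z)
  have hB : 0 < B := mul_pos (hpos o x) (hpos z y)
  calc _ ≤ log (A + B) := log_le_log (mul_pos (hpos o z) (hpos x y)) hkey
    _ ≤ log (2 * max A B) :=
        log_le_log (add_pos hA hB) (by linarith [le_max_left A B, le_max_right A B])
    _ = max (log A) (log B) + log 2 := by
        rw [log_mul two_ne_zero (lt_max_of_lt_left hA).ne', add_comm,
          strictMonoOn_log.monotoneOn.map_max hA hB]

end inversionDist

noncomputable def gromovProduct {α : Type*} (f : α → α → ℝ) (o x y : α) : ℝ :=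
  (f o x + f o y - f x y) / 2

lemma gromovProduct_ge_min_sub_of_four_point {α : Type*} (f : α → α → ℝ) {x y z o : α}
    {δ : ℝ}
    (h : f o z + f x y ≤ max (f o y + f x z) (f o x + f z y) + δ) :
    gromovProduct f o x y ≥ min (gromovProduct f o x z) (gromovProduct f o z y) - δ / 2 := by
  unfold gromovProduct
  rcases max_choice (f o y + f x z) (f o x + f z y) with hm | hm <;> rw [hm] at h
  · linarith [min_le_left ((f o x + f o z - f x z) / 2) ((f o z + f o y - f z y) / 2)]
  · linarith [min_le_right ((f o x + f o z - f x z) / 2) ((f o z + f o y - f z y) / 2)]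

theorem stmt14 {X : Type*} [MetricSpace X]
    (hPt : ∀ x1 x2 x3 x4 : X,
      dist x1 x2 * dist x3 x4 ≤ dist x1 x4 * dist x2 x3 + dist x1 x3 * dist x2 x4)
    (p : X) :
    let χ : X → X → ℝ := fun x y => Real.log (1 + dist x y / (dist p x * dist p y))
    let gp : X → X → X → ℝ := fun o x y => (χ o x + χ o y - χ x y) / 2
    ∀ x y z o : X, x ≠ p → y ≠ p → z ≠ p → o ≠ p →
      gp o x y ≥ min (gp o x z) (gp o z y) - Real.log 2 / 2 := by
  intro χ gp x y z o hx hy hz ho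
  exact gromovProduct_ge_min_sub_of_four_point χ
    (IsPtolemaic.log_one_add_inversionDist_four_point hPt hx hy hz ho)
end

section
/- If (X,d) is a metric space and p ∈ X, then τ_p(x,y) = log(1 + 2d(x,y)/√(d(p,x)d(p,y))) satisfies the triangle inequality on X \ {p} whenever (X,d) is a Ptolemy space, and hence τ_p is a metric on X \ {p}. -/
/-!
Write `u, v, w` for the square roots of `d(p,x), d(p,y), d(p,z)`. Taking logarithms, the triangle
inequality for `τ_p` is the multiplicative inequality `1 + ρ(x,z) ≤ (1 + ρ(x,y)) (1 + ρ(y,z))` for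
`ρ(x,y) = 2 d(x,y) / (u v)`, which after clearing denominators reads
`d(x,z) v² ≤ d(x,y) v w + d(y,z) u v + 2 d(x,y) d(y,z)`.
Ptolemy's inequality for `x, z, p, y` gives `d(x,z) v² ≤ d(x,y) w² + d(y,z) u²`, and the
triangle inequality through `p` gives `w (w - v) ≤ d(y,z)` and `u (u - v) ≤ d(x,y)`.
-/

open Real

lemma mul_sub_le_of_sq_le_sq_add {v w d : ℝ} (hv : 0 ≤ v) (hw : 0 ≤ w) (hd : 0 ≤ d)
    (h : w ^ 2 ≤ v ^ 2 + d) : w * (w - v) ≤ d := by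
  rcases le_total w v with hwv | hvw
  · nlinarith
  · nlinarith

lemma one_add_div_le_mul_one_add_div {u v w a b c : ℝ} (hu : 0 < u) (hv : 0 < v) (hw : 0 < w)
    (ha : 0 ≤ a) (hb : 0 ≤ b) (hP : c * v ^ 2 ≤ a * w ^ 2 + b * u ^ 2)
    (hwv : w ^ 2 ≤ v ^ 2 + b) (huv : u ^ 2 ≤ v ^ 2 + a) :
    1 + 2 * c / (u * w) ≤ (1 + 2 * a / (u * v)) * (1 + 2 * b / (v * w)) := by
  have hw' := mul_sub_le_of_sq_le_sq_add hv.le hw.le hb hwv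
  have hu' := mul_sub_le_of_sq_le_sq_add hv.le hu.le ha huv
  have key : c * v ^ 2 ≤ a * (v * w) + b * (u * v) + 2 * (a * b) := by
    nlinarith [mul_le_mul_of_nonneg_left hw' ha, mul_le_mul_of_nonneg_left hu' hb]
  field_simp
  nlinarith

/-- The quantity `ρ_p(x,y)` with `τ_p = log (1 + ρ_p)`. -/
noncomputable def ptolemyRatio {X : Type*} [PseudoMetricSpace X] (p x y : X) : ℝ :=
  2 * dist x y / (√(dist p x) * √(dist p y))

section PtolemyRatio

variable {X : Type*}

lemma ptolemyRatio_nonneg [PseudoMetricSpace X] (p x y : X) : 0 ≤ ptolemyRatio p x y := by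
  unfold ptolemyRatio
  positivity

lemma ptolemyRatio_comm [PseudoMetricSpace X] (p x y : X) :
    ptolemyRatio p x y = ptolemyRatio p y x := by
  rw [ptolemyRatio, ptolemyRatio, dist_comm x y, mul_comm √(dist p x)]

lemma ptolemyRatio_eq_zero_iff [MetricSpace X] {p x y : X} (hx : x ≠ p) (hy : y ≠ p) :
    ptolemyRatio p x y = 0 ↔ x = y := by
  have hpx : 0 < √(dist p x) := sqrt_pos.mpr (dist_pos.mpr hx.symm)
  have hpy : 0 < √(dist p y) := sqrt_pos.mpr (dist_pos.mpr hy.symm)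
  rw [ptolemyRatio, div_eq_zero_iff, or_iff_left (mul_pos hpx hpy).ne', mul_eq_zero,
    or_iff_right two_ne_zero, dist_eq_zero]

lemma one_add_ptolemyRatio_le_mul [PseudoMetricSpace X]
    (hPt : ∀ x1 x2 x3 x4 : X,
      dist x1 x2 * dist x3 x4 ≤ dist x1 x4 * dist x2 x3 + dist x1 x3 * dist x2 x4)
    {p x y z : X} (hx : 0 < dist p x) (hy : 0 < dist p y) (hz : 0 < dist p z) :
    1 + ptolemyRatio p x z ≤ (1 + ptolemyRatio p x y) * (1 + ptolemyRatio p y z) := by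
  have hsq : ∀ a : X, √(dist p a) ^ 2 = dist p a := fun a => sq_sqrt dist_nonneg
  refine one_add_div_le_mul_one_add_div (sqrt_pos.mpr hx) (sqrt_pos.mpr hy) (sqrt_pos.mpr hz)
    dist_nonneg dist_nonneg ?_ ?_ ?_
  · rw [hsq, hsq, hsq]
    have := hPt x z p y
    rw [dist_comm z p, dist_comm x p, dist_comm z y] at this
    linarith
  · rw [hsq, hsq]
    exact dist_triangle p y z
  · rw [hsq, hsq, dist_comm x y]
    exact dist_triangle p y x

end PtolemyRatio

lemma log_one_add_eq_zero_iff {t : ℝ} (ht : 0 ≤ t) : log (1 + t) = 0 ↔ t = 0 := by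
  refine ⟨fun h => ?_, fun h => by rw [h, add_zero, log_one]⟩
  by_contra ht0
  exact (log_pos (lt_add_of_pos_right 1 (lt_of_le_of_ne ht (Ne.symm ht0)))).ne' h

theorem stmt19 {X : Type*} [MetricSpace X]
    (hPt : ∀ x1 x2 x3 x4 : X,
      dist x1 x2 * dist x3 x4 ≤ dist x1 x4 * dist x2 x3 + dist x1 x3 * dist x2 x4)
    (p : X) :
    let τ : X → X → ℝ := fun x y =>
      Real.log (1 + 2 * dist x y / (Real.sqrt (dist p x) * Real.sqrt (dist p y)))
    (∀ x y z : X, x ≠ p → y ≠ p → z ≠ p → τ x z ≤ τ x y + τ y z) ∧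
    (∀ x y : X, x ≠ p → y ≠ p → 0 ≤ τ x y) ∧
    (∀ x y : X, x ≠ p → y ≠ p → (τ x y = 0 ↔ x = y)) ∧
    (∀ x y : X, x ≠ p → y ≠ p → τ x y = τ y x) := by
  intro τ
  have hτ : ∀ x y, τ x y = log (1 + ptolemyRatio p x y) := fun _ _ => rfl
  have hρ : ∀ x y, 0 < 1 + ptolemyRatio p x y := fun x y => by
    linarith [ptolemyRatio_nonneg p x y]
  refine ⟨fun x y z hx hy hz => ?_, fun x y _ _ => ?_, fun x y hx hy => ?_, fun x y _ _ => ?_⟩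
  · rw [hτ, hτ, hτ, ← log_mul (hρ x y).ne' (hρ y z).ne']
    exact log_le_log (hρ x z) <| one_add_ptolemyRatio_le_mul hPt
      (dist_pos.mpr hx.symm) (dist_pos.mpr hy.symm) (dist_pos.mpr hz.symm)
  · exact log_nonneg (le_add_of_nonneg_right (ptolemyRatio_nonneg p x y))
  · rw [hτ, log_one_add_eq_zero_iff (ptolemyRatio_nonneg p x y), ptolemyRatio_eq_zero_iff hx hy]
  · rw [hτ, hτ, ptolemyRatio_comm]
end
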